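/- arXiv:1609.05853 — 2 statements merged into one kernel-verified Lean document; each statement's English description precedes it below -/
import Mathlib

section
/- Let ε > 0 and let u : ℝ × ℝ → ℝ be a smooth (infinitely differentiable) function of (t,h), 1-periodic in h (u(t,h+1) = u(t,h) for all t,h), with u(t,h) > 0 everywhere, satisfying the regularized PDE ∂ₜu(t,h) = −(u(t,h)⁴/(ε + u(t,h)²)) · ∂ₕ⁴(u(t,·)³)(h) for all t and h. Then for every t, the perturbed free energy F_ε(t) = ∫₀¹ (ε·log u(t,h) + u(t,h)²/2) dh has derivative F_ε'(t) = −∫₀¹ (∂ₕ²(u(t,·)³)(h))² dh ≤ 0. -/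
open intervalIntegral

private lemma periodic_deriv_aux {f : ℝ → ℝ} (hf : ∀ x, f (x + 1) = f x) (x : ℝ) :
    deriv f (x + 1) = deriv f x := by
  have h : (fun y => f (y + 1)) = f := funext hf
  conv_rhs => rw [← h]
  rw [deriv_comp_add_const]

/-- Along smooth positive 1-periodic solutions of the regularized PDE
`u_t = −(u⁴/(ε+u²))(u³)_{hhhh}`, the perturbed free energy
`F_ε(t) = ∫₀¹ (ε·log u + u²/2) dh` satisfies
`F_ε'(t) = −∫₀¹ ((u³)_{hh})² dh ≤ 0`. -/
theorem regularized_perturbed_free_energy_dissipation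
    (ε : ℝ) (hε : 0 < ε)
    (u : ℝ → ℝ → ℝ)
    (hu : ContDiff ℝ (⊤ : ℕ∞) (Function.uncurry u))
    (hper : ∀ t h : ℝ, u t (h + 1) = u t h)
    (hpos : ∀ t h : ℝ, 0 < u t h)
    (hpde : ∀ t h : ℝ, deriv (fun s => u s h) t
      = -((u t h) ^ 4 / (ε + (u t h) ^ 2)) * iteratedDeriv 4 (fun x => (u t x) ^ 3) h) :
    ∀ t : ℝ,
      HasDerivAt
        (fun τ => ∫ h in (0:ℝ)..1, (ε * Real.log (u τ h) + (u τ h) ^ 2 / 2))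
        (-∫ h in (0:ℝ)..1, (iteratedDeriv 2 (fun x => (u t x) ^ 3) h) ^ 2) t
      ∧ (-∫ h in (0:ℝ)..1, (iteratedDeriv 2 (fun x => (u t x) ^ 3) h) ^ 2) ≤ 0 := by
  intro t
  have hu' : ContDiff ℝ (⊤ : ℕ∞) (Function.uncurry u) := hu.of_le (by simp)
  -- smoothness of the slice `u s`
  have hslice : ∀ s : ℝ, ContDiff ℝ (⊤ : ℕ∞) (u s) := by
    intro s
    have : ContDiff ℝ (⊤ : ℕ∞) (fun x : ℝ => Function.uncurry u (s, x)) :=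
      hu'.comp (contDiff_const.prodMk contDiff_id)
    simpa [Function.uncurry] using this
  set f : ℝ → ℝ := fun x => (u t x) ^ 3 with hfdef
  have hfc : ContDiff ℝ (⊤ : ℕ∞) f := (hslice t).pow 3
  have hgc : ∀ n, ContDiff ℝ (⊤ : ℕ∞) (iteratedDeriv n f) := by
    intro n; rw [iteratedDeriv_eq_iterate]; exact hfc.iterate_deriv n
  have hgd : ∀ (n : ℕ) (x : ℝ),
      HasDerivAt (iteratedDeriv n f) (iteratedDeriv (n + 1) f x) x := by
    intro n x
    rw [iteratedDeriv_succ]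
    exact ((hgc n).differentiable (by simp) x).hasDerivAt
  -- periodicity of f and its derivatives
  have hfper : ∀ x, f (x + 1) = f x := fun x => by simp [hfdef, hper]
  have hgper : ∀ (n : ℕ) (x : ℝ), iteratedDeriv n f (x + 1) = iteratedDeriv n f x := by
    intro n
    induction n with
    | zero => simpa [iteratedDeriv_zero] using hfper
    | succ n ih =>
      intro x
      rw [iteratedDeriv_succ]
      exact periodic_deriv_aux ih x
  -- integration by parts (twice)
  have ibp1 : (∫ x in (0:ℝ)..1, f x * iteratedDeriv 4 f x)
      = -∫ x in (0:ℝ)..1, iteratedDeriv 1 f x * iteratedDeriv 3 f x := by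
    have h := intervalIntegral.integral_mul_deriv_eq_deriv_mul
      (u := f) (v := iteratedDeriv 3 f) (u' := iteratedDeriv 1 f) (v' := iteratedDeriv 4 f)
      (a := 0) (b := 1)
      (fun x _ => by simpa [iteratedDeriv_zero] using hgd 0 x)
      (fun x _ => hgd 3 x)
      ((hgc 1).continuous.intervalIntegrable 0 1)
      ((hgc 4).continuous.intervalIntegrable 0 1)
    rw [h, show f 1 = f 0 from by simpa using hfper 0,
      show iteratedDeriv 3 f 1 = iteratedDeriv 3 f 0 from by simpa using hgper 3 0]
    ring
  have ibp2 : (∫ x in (0:ℝ)..1, iteratedDeriv 1 f x * iteratedDeriv 3 f x)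
      = -∫ x in (0:ℝ)..1, iteratedDeriv 2 f x ^ 2 := by
    have h := intervalIntegral.integral_mul_deriv_eq_deriv_mul
      (u := iteratedDeriv 1 f) (v := iteratedDeriv 2 f)
      (u' := iteratedDeriv 2 f) (v' := iteratedDeriv 3 f)
      (a := 0) (b := 1)
      (fun x _ => hgd 1 x)
      (fun x _ => hgd 2 x)
      ((hgc 2).continuous.intervalIntegrable 0 1)
      ((hgc 3).continuous.intervalIntegrable 0 1)
    rw [h, show iteratedDeriv 1 f 1 = iteratedDeriv 1 f 0 from by simpa using hgper 1 0,
      show iteratedDeriv 2 f 1 = iteratedDeriv 2 f 0 from by simpa using hgper 2 0]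
    have : (∫ x in (0:ℝ)..1, iteratedDeriv 2 f x * iteratedDeriv 2 f x)
        = ∫ x in (0:ℝ)..1, iteratedDeriv 2 f x ^ 2 := by
      congr 1; funext x; ring
    rw [this]; ring
  -- the time derivative of u
  have hUdiff : Differentiable ℝ (Function.uncurry u) := hu'.differentiable (by simp)
  set P : ℝ → ℝ → ℝ := fun x h => (fderiv ℝ (Function.uncurry u) (x, h)) (1, 0) with hPdef
  have hDt : ∀ x h : ℝ, HasDerivAt (fun s => u s h) (P x h) x := by
    intro x h
    have h1 : HasDerivAt (fun s : ℝ => (s, h)) ((1 : ℝ), (0 : ℝ)) x :=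
      HasDerivAt.prodMk (hasDerivAt_id x) (hasDerivAt_const x h)
    have := (hUdiff (x, h)).hasFDerivAt.comp_hasDerivAt x h1
    simpa [Function.uncurry, Function.comp_def] using this
  set V : ℝ → ℝ → ℝ := fun x h => (ε / u x h + u x h) * P x h with hVdef
  have hFd : ∀ x h : ℝ,
      HasDerivAt (fun s => ε * Real.log (u s h) + (u s h) ^ 2 / 2) (V x h) x := by
    intro x h
    have h0 := hDt x h
    have hne : u x h ≠ 0 := (hpos x h).ne'
    have hlog : HasDerivAt (fun s => Real.log (u s h)) ((u x h)⁻¹ * P x h) x :=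
      by have := (Real.hasDerivAt_log hne).comp x h0; exact this
    have hsq : HasDerivAt (fun s => (u s h) ^ 2) (2 * u x h * P x h) x := by
      have := h0.fun_pow 2
      simpa using this
    have := (hlog.const_mul ε).add (hsq.div_const 2)
    refine this.congr_deriv ?_
    rw [hVdef]
    field_simp
  -- joint continuity of V
  have huc : Continuous fun p : ℝ × ℝ => u p.1 p.2 := by
    have := hu'.continuous
    exact this
  have hPc : Continuous fun p : ℝ × ℝ => P p.1 p.2 := by
    have h1 : Continuous fun p : ℝ × ℝ => (fderiv ℝ (Function.uncurry u) p) (1, 0) :=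
      (hu'.continuous_fderiv (by simp)).clm_apply continuous_const
    simpa [hPdef] using h1
  have hVc : Continuous fun p : ℝ × ℝ => V p.1 p.2 :=
    ((continuous_const.div huc fun p => (hpos p.1 p.2).ne').add huc).mul hPc
  -- bound on a compact set
  obtain ⟨C, hC⟩ := ((isCompact_closedBall t 1).prod isCompact_Icc).exists_bound_of_continuousOn
    hVc.continuousOn
  have hFcont : ∀ x : ℝ, Continuous fun h => ε * Real.log (u x h) + (u x h) ^ 2 / 2 := by
    intro x
    have hc : Continuous (u x) := (hslice x).continuous
    exact (continuous_const.mul (hc.log fun h => (hpos x h).ne')).add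
      ((hc.pow 2).div_const 2)
  have hVtc : Continuous (V t) := hVc.comp (Continuous.prodMk_right t)
  -- differentiate under the integral sign
  have key := intervalIntegral.hasDerivAt_integral_of_dominated_loc_of_deriv_le
    (F := fun x h => ε * Real.log (u x h) + (u x h) ^ 2 / 2) (F' := V) (x₀ := t)
    (a := 0) (b := 1) (bound := fun _ => C) (μ := MeasureTheory.volume) (Metric.ball_mem_nhds t one_pos)
    (Filter.Eventually.of_forall fun x => (hFcont x).aestronglyMeasurable)
    ((hFcont t).intervalIntegrable 0 1)
    hVtc.aestronglyMeasurable
    (Filter.Eventually.of_forall (fun h hh x hx => by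
      have hmem : (x, h) ∈ Metric.closedBall t 1 ×ˢ Set.Icc (0:ℝ) 1 := by
        constructor
        · exact Metric.ball_subset_closedBall hx
        · rw [Set.uIoc_of_le (by norm_num : (0:ℝ) ≤ 1)] at hh
          exact Set.Ioc_subset_Icc_self hh
      exact hC (x, h) hmem))
    (intervalIntegrable_const)
    (Filter.Eventually.of_forall fun h _ x _ => hFd x h)
  -- identify the derivative
  have hVt : ∀ h : ℝ, V t h = -(f h * iteratedDeriv 4 f h) := by
    intro h
    have hPt : P t h = deriv (fun s => u s h) t := ((hDt t h).deriv).symm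
    have h1 : u t h ≠ 0 := (hpos t h).ne'
    have h2 : ε + (u t h) ^ 2 ≠ 0 := by positivity
    rw [hVdef]
    simp only
    rw [hPt, hpde t h]
    rw [hfdef]
    simp only
    field_simp
  have hint : (∫ h in (0:ℝ)..1, V t h)
      = -∫ h in (0:ℝ)..1, (iteratedDeriv 2 f h) ^ 2 := by
    have h1 : (∫ h in (0:ℝ)..1, V t h)
        = ∫ h in (0:ℝ)..1, -(f h * iteratedDeriv 4 f h) := by
      congr 1; funext h; exact hVt h
    rw [h1, intervalIntegral.integral_neg, ibp1, ibp2]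
    ring
  have hnn : (0:ℝ) ≤ ∫ h in (0:ℝ)..1, (iteratedDeriv 2 f h) ^ 2 :=
    intervalIntegral.integral_nonneg (by norm_num) fun h _ => sq_nonneg _
  refine ⟨?_, by linarith⟩
  have := key.2
  rwa [hint] at this
end

section
/- Let ε > 0 and let u : ℝ × ℝ → ℝ be a smooth (infinitely differentiable) function of (t,h), 1-periodic in h (u(t,h+1) = u(t,h) for all t,h), with u(t,h) > 0 everywhere, satisfying the regularized PDE ∂ₜu(t,h) = −(u(t,h)⁴/(ε + u(t,h)²)) · ∂ₕ⁴(u(t,·)³)(h) for all t and h. Then the quantity ∫₀¹ (ε/(3u(t,h)³) + 1/u(t,h)) dh is conserved: for all t, ∫₀¹ (ε/(3u(t,h)³) + 1/u(t,h)) dh = ∫₀¹ (ε/(3u(0,h)³) + 1/u(0,h)) dh. -/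
open intervalIntegral

noncomputable def pd (F : ℝ × ℝ → ℝ) : ℝ × ℝ → ℝ := fun p => deriv (fun x => F (p.1, x)) p.2

lemma contDiff_pd {F : ℝ × ℝ → ℝ} (hF : ContDiff ℝ (⊤:ℕ∞) F) : ContDiff ℝ (⊤:ℕ∞) (pd F) := by
  have h1 : ContDiff ℝ (⊤:ℕ∞) (Function.uncurry fun (p : ℝ × ℝ) (x : ℝ) => F (p.1, x)) :=
    hF.comp ((contDiff_fst.fst).prodMk contDiff_snd)
  have h2 := (h1.fderiv (contDiff_snd)
    (le_of_eq (show ((⊤:ℕ∞):WithTop ℕ∞) + 1 = ((⊤:ℕ∞):WithTop ℕ∞) from rfl))).clm_apply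
    (contDiff_const (c := (1:ℝ)))
  have he : pd F = fun p : ℝ × ℝ => fderiv ℝ (fun x => F (p.1, x)) p.2 1 := by
    funext p; rw [pd, fderiv_apply_one_eq_deriv]
  rw [he]; exact h2

lemma pd_iter_eq (F : ℝ × ℝ → ℝ) (p : ℝ × ℝ) :
    pd (pd (pd (pd F))) p = iteratedDeriv 4 (fun x => F (p.1, x)) p.2 := by
  simp only [iteratedDeriv_succ, iteratedDeriv_zero]
  rfl

lemma periodic_deriv' (f : ℝ → ℝ) (hf : Function.Periodic f 1) :
    Function.Periodic (deriv f) 1 := by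
  intro x
  calc deriv f (x + 1) = deriv (fun y => f (y + 1)) x := (deriv_comp_add_const f 1 x).symm
    _ = deriv f x := by congr 1; funext y; exact hf y

lemma periodic_iteratedDeriv (f : ℝ → ℝ) (hf : Function.Periodic f 1) (n : ℕ) :
    Function.Periodic (iteratedDeriv n f) 1 := by
  induction n with
  | zero => simpa [iteratedDeriv_zero] using hf
  | succ n ih => rw [iteratedDeriv_succ]; exact periodic_deriv' _ ih

/-- Along smooth positive 1-periodic solutions of the regularized PDE
`u_t = −(u⁴/(ε+u²))(u³)_{hhhh}`, the quantity `∫₀¹ (ε/(3u³) + 1/u) dh` is conserved. -/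
theorem regularized_conservation_law
    (ε : ℝ) (hε : 0 < ε)
    (u : ℝ → ℝ → ℝ)
    (hu : ContDiff ℝ (⊤ : ℕ∞) (Function.uncurry u))
    (hper : ∀ t h : ℝ, u t (h + 1) = u t h)
    (hpos : ∀ t h : ℝ, 0 < u t h)
    (hpde : ∀ t h : ℝ, deriv (fun s => u s h) t
      = -((u t h) ^ 4 / (ε + (u t h) ^ 2)) * iteratedDeriv 4 (fun x => (u t x) ^ 3) h) :
    ∀ t : ℝ,
      ∫ h in (0:ℝ)..1, (ε / (3 * (u t h) ^ 3) + 1 / u t h)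
        = ∫ h in (0:ℝ)..1, (ε / (3 * (u 0 h) ^ 3) + 1 / u 0 h) := by
  have hu' : ContDiff ℝ (⊤:ℕ∞) (Function.uncurry u) := hu.of_le (by simp)
  have hucont : Continuous (Function.uncurry u) := hu'.continuous
  -- cube of u, as a function of the pair
  have hcube : ContDiff ℝ (⊤:ℕ∞) (fun p : ℝ × ℝ => (u p.1 p.2) ^ 3) := hu'.pow 3
  set G : ℝ × ℝ → ℝ := fun p => (u p.1 p.2) ^ 3 with hG
  set W : ℝ × ℝ → ℝ := pd (pd (pd (pd G))) with hWdef
  have hWsm : ContDiff ℝ (⊤:ℕ∞) W := contDiff_pd (contDiff_pd (contDiff_pd (contDiff_pd hcube)))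
  have hWcont : Continuous W := hWsm.continuous
  have hW : ∀ t h : ℝ, W (t, h) = iteratedDeriv 4 (fun x => (u t x) ^ 3) h := by
    intro t h; exact pd_iter_eq G (t, h)
  -- the conserved-density integrand
  set V : ℝ → ℝ → ℝ := fun t h => ε / (3 * (u t h) ^ 3) + 1 / u t h with hVdef
  have hne : ∀ t h : ℝ, u t h ≠ 0 := fun t h => (hpos t h).ne'
  have hVcont : Continuous (fun p : ℝ × ℝ => V p.1 p.2) := by
    apply Continuous.add
    · exact continuous_const.div (continuous_const.mul (hucont.pow 3))
        (fun p => by have := hpos p.1 p.2; positivity)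
    · exact continuous_const.div hucont (fun p => hne p.1 p.2)
  -- time derivative of the density equals W
  have hAderiv : ∀ t h : ℝ, HasDerivAt (fun s => V s h) (W (t, h)) t := by
    intro t h
    have hdiffu : DifferentiableAt ℝ (fun s => u s h) t := by
      have := (hu.differentiable (by simp) (x := (t, h))).comp t
        (((differentiableAt_fun_id).prodMk (differentiableAt_const h)) : DifferentiableAt ℝ (fun s : ℝ => (s, h)) t)
      exact this
    have hut : HasDerivAt (fun s => u s h) (deriv (fun s => u s h) t) t := hdiffu.hasDerivAt
    set d := deriv (fun s => u s h) t with hd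
    set a := u t h with ha
    have h3 : HasDerivAt (fun s => 3 * (u s h) ^ 3) (3 * ((3:ℕ) * a ^ 2 * d)) t :=
      (hut.pow 3).const_mul 3
    have hapos : 0 < a := hpos t h
    have hden : 3 * a ^ 3 ≠ 0 := by positivity
    have ha0 : a ≠ 0 := hne t h
    have hA : HasDerivAt (fun s => ε / (3 * (u s h) ^ 3))
        ((0 * (3 * a ^ 3) - ε * (3 * ((3:ℕ) * a ^ 2 * d))) / (3 * a ^ 3) ^ 2) t :=
      (hasDerivAt_const t ε).div h3 hden
    have hB : HasDerivAt (fun s => 1 / u s h) ((0 * a - 1 * d) / a ^ 2) t :=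
      (hasDerivAt_const t (1:ℝ)).div hut ha0
    have hsum := hA.add hB
    have hdd : d = -(a ^ 4 / (ε + a ^ 2)) * iteratedDeriv 4 (fun x => (u t x) ^ 3) h :=
      hpde t h
    have hεa : ε + a ^ 2 ≠ 0 := by positivity
    have hval : (0 * (3 * a ^ 3) - ε * (3 * ((3:ℕ) * a ^ 2 * d))) / (3 * a ^ 3) ^ 2
        + (0 * a - 1 * d) / a ^ 2 = W (t, h) := by
      rw [hW t h, hdd]
      field_simp
      ring
    rw [hval] at hsum
    exact hsum
  -- the conserved quantity
  set g : ℝ → ℝ := fun t => ∫ h in (0:ℝ)..1, V t h with hg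
  -- integral of W over a period vanishes
  have hWint : ∀ t : ℝ, (∫ h in (0:ℝ)..1, W (t, h)) = 0 := by
    intro t
    have hf3 : ContDiff ℝ (⊤:ℕ∞) (fun x => (u t x) ^ 3) :=
      hcube.comp ((contDiff_const (c := t)).prodMk contDiff_id)
    set P : ℝ → ℝ := iteratedDeriv 3 (fun x => (u t x) ^ 3) with hP
    have hPdiff : Differentiable ℝ P := hf3.differentiable_iteratedDeriv 3 (by
      show ((3:ℕ∞) : WithTop ℕ∞) < ((⊤:ℕ∞) : WithTop ℕ∞)
      exact WithTop.coe_lt_coe.mpr (lt_top_iff_ne_top.mpr (by decide)))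
    have hderivP : (fun h => W (t, h)) = deriv P := by
      funext h
      rw [hW t h, show (4:ℕ) = 3 + 1 from rfl, iteratedDeriv_succ]
    have hWint' : IntervalIntegrable (deriv P) MeasureTheory.volume 0 1 := by
      rw [← hderivP]
      exact (hWcont.comp (Continuous.prodMk_right t)).intervalIntegrable 0 1
    have := intervalIntegral.integral_deriv_eq_sub (fun x _ => hPdiff x) hWint'
    have hPer : Function.Periodic P 1 := by
      apply periodic_iteratedDeriv
      intro x
      simp only []
      rw [hper t x]
    calc (∫ h in (0:ℝ)..1, W (t, h)) = ∫ h in (0:ℝ)..1, deriv P h := by rw [hderivP]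
      _ = P 1 - P 0 := this
      _ = 0 := by have := hPer 0; rw [zero_add] at this; rw [this]; ring
  -- derivative of g is zero everywhere
  have hgderiv : ∀ t₀ : ℝ, HasDerivAt g 0 t₀ := by
    intro t₀
    obtain ⟨C, hC⟩ := (isCompact_Icc.prod isCompact_Icc :
        IsCompact ((Set.Icc (t₀ - 1) (t₀ + 1)) ×ˢ (Set.Icc (0:ℝ) 1))).exists_bound_of_continuousOn
      hWcont.continuousOn
    have key := intervalIntegral.hasDerivAt_integral_of_dominated_loc_of_deriv_le
      (F := fun t h => V t h) (F' := fun t h => W (t, h)) (x₀ := t₀)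
      (a := 0) (b := 1) (bound := fun _ => C) (μ := MeasureTheory.volume)
      (Metric.ball_mem_nhds t₀ one_pos)
      (Filter.Eventually.of_forall fun x =>
        ((hVcont.comp (Continuous.prodMk_right x)).aestronglyMeasurable))
      ((hVcont.comp (Continuous.prodMk_right t₀)).intervalIntegrable 0 1)
      ((hWcont.comp (Continuous.prodMk_right t₀)).aestronglyMeasurable)
      (Filter.Eventually.of_forall ?_)
      (intervalIntegrable_const)
      (Filter.Eventually.of_forall fun h _ x _ => hAderiv x h)
    · have h2 := key.2
      rw [hWint t₀] at h2
      exact h2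
    · intro h hmem x hx
      apply hC
      constructor
      · rw [Metric.mem_ball, Real.dist_eq] at hx
        have := abs_le.1 hx.le
        exact Set.mem_Icc.2 ⟨by linarith [this.1], by linarith [this.2]⟩
      · rw [Set.uIoc_of_le (by norm_num : (0:ℝ) ≤ 1)] at hmem
        exact Set.mem_Icc.2 ⟨hmem.1.le, hmem.2⟩
  -- conclude
  intro t
  have hdiff : Differentiable ℝ g := fun x => (hgderiv x).differentiableAt
  have hzero : ∀ x, deriv g x = 0 := fun x => (hgderiv x).deriv
  exact is_const_of_deriv_eq_zero hdiff hzero t 0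
end
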